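/- Let 0 < β < 1 and C > 0, and let u : ℂ → ℝ be a measurable function with 0 ≤ u(ζ) ≤ C‖ζ‖^{2β−2} for all ζ ≠ 0. Let ρ : ℂ → ℝ be a nonnegative bounded measurable function supported in the closed unit disk with ∫_ℂ ρ dλ = 1, and for δ > 0 set u_δ(z) = ∫_ℂ u(z − δ w) ρ(w) dλ(w). Then there exists a constant C″, depending only on β, C and sup ρ, such that for every δ > 0 and every z ∈ ℂ one has u_δ(z) · (‖z‖² + δ²)^{1−β} ≤ C″. -/

import Mathlib

/-!
Split according to whether `z` is far from the cone point (`2δ ≤ ‖z‖`) or not. Far from it,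
`z - δw` stays at distance `≥ ‖z‖/2` from `0` on the support of `ρ`, so `u_δ(z) ≤ C(‖z‖/2)^{2β-2}`.
Near it, bound `ρ` by its supremum and rescale by `δ`: `u_δ(z)` is at most `δ^{2β-2}` times the
integral of the locally integrable kernel `‖v‖^{2β-2}` over a fixed ball. In both cases the weight
`(‖z‖² + δ²)^{1-β}` is comparable to `r^{2-2β}`, with `r = ‖z‖/2` resp. `r = δ`.
-/

open Real MeasureTheory Metric

section Averaging

variable {α : Type*} [MeasurableSpace α] {μ : Measure α}

theorem integral_mul_le_of_le_on_support {f ρ : α → ℝ} {c : ℝ} (hf : ∀ w, 0 ≤ f w)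
    (hρ_nonneg : ∀ w, 0 ≤ ρ w) (hρ_int : ∫ w, ρ w ∂μ = 1)
    (hfc : ∀ w ∈ Function.support ρ, f w ≤ c) :
    ∫ w, f w * ρ w ∂μ ≤ c := by
  have hρ : Integrable ρ μ := Integrable.of_integral_ne_zero (by simp [hρ_int])
  have hle : ∀ w, f w * ρ w ≤ c * ρ w := by
    intro w
    by_cases hw : ρ w = 0
    · simp [hw]
    · exact mul_le_mul_of_nonneg_right (hfc w hw) (hρ_nonneg w)
  calc ∫ w, f w * ρ w ∂μ ≤ ∫ w, c * ρ w ∂μ :=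
        integral_mono_of_nonneg (.of_forall fun w => mul_nonneg (hf w) (hρ_nonneg w))
          (hρ.const_mul c) (.of_forall hle)
    _ = c := by rw [integral_const_mul, hρ_int, mul_one]

end Averaging

section Mollification

variable {E : Type*} [NormedAddCommGroup E] [NormedSpace ℝ E] {u ρ : E → ℝ} {C M p R δ : ℝ} {z : E}

theorem half_norm_le_norm_sub_smul (hδ : 0 ≤ δ) (hz : 2 * δ ≤ ‖z‖) {w : E} (hw : ‖w‖ ≤ 1) :
    ‖z‖ / 2 ≤ ‖z - δ • w‖ := by
  have : ‖δ • w‖ ≤ δ := by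
    rw [norm_smul, Real.norm_of_nonneg hδ]
    exact mul_le_of_le_one_right hδ hw
  linarith [norm_sub_norm_le z (δ • w)]

variable [MeasurableSpace E] {μ : Measure E}

theorem integral_mollify_le_of_two_mul_le_norm (hp : p ≤ 0) (hC : 0 ≤ C)
    (hu_nonneg : ∀ ζ, 0 ≤ u ζ) (hu_bd : ∀ ζ, ζ ≠ 0 → u ζ ≤ C * ‖ζ‖ ^ p)
    (hρ_nonneg : ∀ w, 0 ≤ ρ w) (hρ_supp : Function.support ρ ⊆ closedBall 0 1)
    (hρ_int : ∫ w, ρ w ∂μ = 1) (hδ : 0 < δ) (hz : 2 * δ ≤ ‖z‖) :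
    ∫ w, u (z - δ • w) * ρ w ∂μ ≤ C * (‖z‖ / 2) ^ p := by
  refine integral_mul_le_of_le_on_support (fun _ => hu_nonneg _) hρ_nonneg hρ_int fun w hw => ?_
  have hw1 : ‖w‖ ≤ 1 := mem_closedBall_zero_iff.mp (hρ_supp hw)
  have hfar := half_norm_le_norm_sub_smul hδ.le hz hw1
  have hz_pos : 0 < ‖z‖ / 2 := by linarith
  calc u (z - δ • w) ≤ C * ‖z - δ • w‖ ^ p :=
        hu_bd _ (norm_pos_iff.mp (hz_pos.trans_le hfar))
    _ ≤ C * (‖z‖ / 2) ^ p := mul_le_mul_of_nonneg_left (rpow_le_rpow_of_nonpos hz_pos hfar hp) hC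

variable [BorelSpace E] [FiniteDimensional ℝ E] [μ.IsAddHaarMeasure]

theorem locallyIntegrable_norm_rpow [Nontrivial E] (hp : -(Module.finrank ℝ E : ℝ) < p) :
    LocallyIntegrable (fun v : E => ‖v‖ ^ p) μ := by
  refine locallyIntegrable_of_norm_le_rpow Module.finrank_pos (C := 1) (α := -p) (by linarith)
    (.of_forall fun v => ?_) (measurable_norm.pow_const p).aestronglyMeasurable
  rw [neg_neg, one_mul, Real.norm_of_nonneg (by positivity)]

theorem integral_mollify_le_of_norm_add_le [NullSingletonClass μ]
    (hp_int : IntegrableOn (fun v : E => ‖v‖ ^ p) (closedBall 0 R) μ) (hC : 0 ≤ C)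
    (hu_nonneg : ∀ ζ, 0 ≤ u ζ) (hu_bd : ∀ ζ, ζ ≠ 0 → u ζ ≤ C * ‖ζ‖ ^ p)
    (hρ_nonneg : ∀ w, 0 ≤ ρ w) (hρ_le : ∀ w, ρ w ≤ M)
    (hρ_supp : Function.support ρ ⊆ closedBall 0 1) (hδ : 0 < δ) (hz : ‖z‖ + δ ≤ R * δ) :
    ∫ w, u (z - δ • w) * ρ w ∂μ ≤ C * M * δ ^ p * ∫ v in closedBall 0 R, ‖v‖ ^ p ∂μ := by
  have hM : 0 ≤ M := (hρ_nonneg 0).trans (hρ_le 0)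
  set k : E → ℝ := (closedBall 0 R).indicator fun v => ‖v‖ ^ p
  have hk_nonneg : ∀ v, 0 ≤ k v := Set.indicator_nonneg fun v _ => by positivity
  have hbd : ∀ᵐ w ∂μ, u (z - δ • w) * ρ w ≤ C * M * δ ^ p * k (δ⁻¹ • z - w) := by
    filter_upwards [measure_eq_zero_iff_ae_notMem.mp (measure_singleton (δ⁻¹ • z))] with w hw
    by_cases hρw : ρ w = 0
    · rw [hρw, mul_zero]
      exact mul_nonneg (by positivity) (hk_nonneg _)
    have hw1 : ‖w‖ ≤ 1 := mem_closedBall_zero_iff.mp (hρ_supp hρw)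
    have hrescale : z - δ • w = δ • (δ⁻¹ • z - w) := by
      rw [smul_sub, smul_inv_smul₀ hδ.ne']
    have hne : δ⁻¹ • z - w ≠ 0 := sub_ne_zero.mpr fun h => hw (h ▸ rfl)
    have hmem : δ⁻¹ • z - w ∈ closedBall 0 R := by
      rw [mem_closedBall_zero_iff]
      have : ‖δ⁻¹ • z‖ + 1 ≤ R := by
        rw [norm_smul, Real.norm_of_nonneg (inv_nonneg.mpr hδ.le),
          show δ⁻¹ * ‖z‖ + 1 = (‖z‖ + δ) / δ by field_simp, div_le_iff₀ hδ]
        exact hz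
      linarith [norm_sub_le (δ⁻¹ • z) w]
    have hu : u (z - δ • w) ≤ C * δ ^ p * k (δ⁻¹ • z - w) := by
      calc u (z - δ • w) ≤ C * ‖z - δ • w‖ ^ p :=
            hu_bd _ (hrescale ▸ smul_ne_zero hδ.ne' hne)
        _ = C * δ ^ p * k (δ⁻¹ • z - w) := by
            rw [hrescale, norm_smul, Real.norm_of_nonneg hδ.le, mul_rpow hδ.le (norm_nonneg _)]
            simp only [k, Set.indicator_of_mem hmem, mul_assoc]
    calc u (z - δ • w) * ρ w ≤ C * δ ^ p * k (δ⁻¹ • z - w) * M :=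
          mul_le_mul hu (hρ_le w) (hρ_nonneg w) (by have := hk_nonneg (δ⁻¹ • z - w); positivity)
      _ = C * M * δ ^ p * k (δ⁻¹ • z - w) := by ring
  calc ∫ w, u (z - δ • w) * ρ w ∂μ ≤ ∫ w, C * M * δ ^ p * k (δ⁻¹ • z - w) ∂μ :=
        integral_mono_of_nonneg (.of_forall fun w => mul_nonneg (hu_nonneg _) (hρ_nonneg w))
          ((((integrable_indicator_iff measurableSet_closedBall).mpr hp_int).comp_sub_left
            (δ⁻¹ • z)).const_mul _) hbd
    _ = C * M * δ ^ p * ∫ v in closedBall 0 R, ‖v‖ ^ p ∂μ := by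
        rw [integral_const_mul, integral_sub_left_eq_self k μ,
          integral_indicator measurableSet_closedBall]

end Mollification

theorem mul_rpow_le_of_le_mul_rpow {I A r x k β : ℝ} (hβ : β ≤ 1) (hA : 0 ≤ A) (hr : 0 < r)
    (hx : 0 ≤ x) (hI : I ≤ A * r ^ (2 * β - 2)) (hxk : x ≤ k * r ^ 2) :
    I * x ^ (1 - β) ≤ A * k ^ (1 - β) := by
  have hk : 0 ≤ k := nonneg_of_mul_nonneg_left (hx.trans hxk) (by positivity)
  have hcancel : r ^ (2 * β - 2) * (r ^ 2) ^ (1 - β) = 1 := by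
    rw [← rpow_natCast, ← rpow_mul hr.le, ← rpow_add hr]
    ring_nf
    exact rpow_zero r
  calc I * x ^ (1 - β) ≤ A * r ^ (2 * β - 2) * (k * r ^ 2) ^ (1 - β) := by
        gcongr
    _ = A * k ^ (1 - β) * (r ^ (2 * β - 2) * (r ^ 2) ^ (1 - β)) := by
        rw [mul_rpow hk (sq_nonneg r)]; ring
    _ = A * k ^ (1 - β) := by rw [hcancel, mul_one]

theorem mollified_conic_density_uniform_bound_general
    (β C : ℝ) (hβ0 : 0 < β) (hβ1 : β < 1)
    (u : ℂ → ℝ) (hu_nonneg : ∀ ζ, 0 ≤ u ζ)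
    (hu_bd : ∀ ζ : ℂ, ζ ≠ 0 → u ζ ≤ C * ‖ζ‖ ^ (2 * β - 2))
    (ρ : ℂ → ℝ) (hρ_nonneg : ∀ w, 0 ≤ ρ w)
    (hρ_bd : ∃ M : ℝ, ∀ w, ρ w ≤ M)
    (hρ_supp : Function.support ρ ⊆ Metric.closedBall (0 : ℂ) 1)
    (hρ_int : ∫ w : ℂ, ρ w = 1) :
    ∃ C'' : ℝ, ∀ δ : ℝ, 0 < δ → ∀ z : ℂ,
      (∫ w : ℂ, u (z - δ • w) * ρ w) * (‖z‖ ^ 2 + δ ^ 2) ^ (1 - β) ≤ C'' := by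
  obtain ⟨M, hM⟩ := hρ_bd
  have hM0 : 0 ≤ M := (hρ_nonneg 0).trans (hM 0)
  have hC : 0 ≤ C := by simpa using (hu_nonneg 1).trans (hu_bd 1 one_ne_zero)
  have hp : -(Module.finrank ℝ ℂ : ℝ) < 2 * β - 2 := by
    rw [Complex.finrank_real_complex]; push_cast; linarith
  set K := ∫ v in closedBall (0 : ℂ) 3, ‖v‖ ^ (2 * β - 2)
  have hK : 0 ≤ K := setIntegral_nonneg measurableSet_closedBall fun v _ => by positivity
  refine ⟨max (C * 5 ^ (1 - β)) (C * M * K * 5 ^ (1 - β)), fun δ hδ z => ?_⟩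
  rcases le_or_gt (2 * δ) ‖z‖ with hfar | hnear
  · have hI := integral_mollify_le_of_two_mul_le_norm (by linarith) hC hu_nonneg hu_bd
      hρ_nonneg hρ_supp hρ_int hδ hfar
    exact le_max_of_le_left <| mul_rpow_le_of_le_mul_rpow (r := ‖z‖ / 2) hβ1.le hC
      (by linarith) (by positivity) hI (by nlinarith)
  · have hI := integral_mollify_le_of_norm_add_le (μ := volume)
      ((locallyIntegrable_norm_rpow hp).integrableOn_isCompact (isCompact_closedBall _ _))
      hC hu_nonneg hu_bd hρ_nonneg hM hρ_supp hδ (by linarith : ‖z‖ + δ ≤ 3 * δ)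
    exact le_max_of_le_right <| mul_rpow_le_of_le_mul_rpow hβ1.le (by positivity) hδ
      (by positivity) (hI.trans_eq (by ring)) (by nlinarith [norm_nonneg z])

/-- **Uniform bound on the mollified conic density** (combination of parts (a) and (b) of
the paper's growth Lemma, with the choice `ε′ = δ²`, used in the `C⁰` estimate).
If `0 ≤ u(ζ) ≤ C‖ζ‖^{2β−2}` for `ζ ≠ 0` and
`u_δ(z) = ∫ u(z − δw) ρ(w) dλ(w)` is the δ-mollification of `u` by a kernel `ρ` supported in
the closed unit disk, then there is a constant `C″` (depending only on `β`, `C` and `sup ρ`)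
such that `u_δ(z) · (‖z‖² + δ²)^{1−β} ≤ C″` for every `δ > 0` and every `z ∈ ℂ`. -/
theorem mollified_conic_density_uniform_bound
    (β C : ℝ) (hβ0 : 0 < β) (hβ1 : β < 1) (hC : 0 < C)
    (u : ℂ → ℝ) (hu_meas : Measurable u) (hu_nonneg : ∀ ζ, 0 ≤ u ζ)
    (hu_bd : ∀ ζ : ℂ, ζ ≠ 0 → u ζ ≤ C * ‖ζ‖ ^ (2 * β - 2))
    (ρ : ℂ → ℝ) (hρ_meas : Measurable ρ) (hρ_nonneg : ∀ w, 0 ≤ ρ w)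
    (hρ_bd : ∃ M : ℝ, ∀ w, ρ w ≤ M)
    (hρ_supp : Function.support ρ ⊆ Metric.closedBall (0 : ℂ) 1)
    (hρ_int : ∫ w : ℂ, ρ w = 1) :
    ∃ C'' : ℝ, ∀ δ : ℝ, 0 < δ → ∀ z : ℂ,
      (∫ w : ℂ, u (z - δ • w) * ρ w) * (‖z‖ ^ 2 + δ ^ 2) ^ (1 - β) ≤ C'' :=
  mollified_conic_density_uniform_bound_general β C hβ0 hβ1 u hu_nonneg hu_bd ρ hρ_nonneg hρ_bd
    hρ_supp hρ_int
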